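/- For every integer n ≥ 1, the function p : (0, 1/n²) → ℝ defined by p(s) = s(1−n²s)/(1+s+2ns) takes values in (0,1), its derivative vanishes on (0,1/n²) only at s = 1/(2n²+n), it attains its global maximum on (0,1/n²) uniquely at s = 1/(2n²+n), and p(1/(2n²+n)) = 1/(1+2n)². -/

import Mathlib

/-- The pinching-constant function `p(s) = s(1−n²s)/(1+s+2ns)`. -/
noncomputable def pfun (n : ℕ) (s : ℝ) : ℝ :=
  s * (1 - (n : ℝ) ^ 2 * s) / (1 + s + 2 * (n : ℝ) * s)

lemma pfun_key (n : ℕ) (s : ℝ) (hg : 1 + s + 2 * (n : ℝ) * s ≠ 0) :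
    pfun n s = 1 / (1 + 2*(n:ℝ))^2
      - (1 - (n:ℝ)*(2*(n:ℝ)+1)*s)^2 / ((1 + 2*(n:ℝ))^2 * (1 + s + 2 * (n : ℝ) * s)) := by
  have h2n : (1 + 2*(n:ℝ)) ≠ 0 := by positivity
  unfold pfun
  rw [eq_sub_iff_add_eq, div_add_div _ _ hg (mul_ne_zero (pow_ne_zero 2 h2n) hg),
    div_eq_div_iff (mul_ne_zero hg (mul_ne_zero (pow_ne_zero 2 h2n) hg)) (pow_ne_zero 2 h2n)]
  ring

lemma pfun_deriv (n : ℕ) (s : ℝ) (hg : 1 + s + 2 * (n : ℝ) * s ≠ 0) :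
    deriv (pfun n) s
      = (1 - 2*(n:ℝ)^2*s - (n:ℝ)^2*(1+2*(n:ℝ))*s^2) / (1 + s + 2 * (n : ℝ) * s)^2 := by
  have h1 : HasDerivAt (fun x : ℝ => x * (1 - (n : ℝ) ^ 2 * x))
      (1 * (1 - (n:ℝ)^2*s) + s * (-((n:ℝ)^2 * 1))) s :=
    (hasDerivAt_id s).mul (((hasDerivAt_id s).const_mul ((n:ℝ)^2)).const_sub 1)
  have h2 : HasDerivAt (fun x : ℝ => 1 + x + 2 * (n:ℝ) * x) ((0 + 1) + 2*(n:ℝ)*1) s :=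
    ((hasDerivAt_const s 1).add (hasDerivAt_id s)).add ((hasDerivAt_id s).const_mul (2*(n:ℝ)))
  have h := (h1.div h2 hg).deriv
  unfold pfun
  rw [show (fun s : ℝ => s * (1 - (n:ℝ)^2 * s) / (1 + s + 2 * (n:ℝ) * s)) = ((fun x : ℝ => x * (1 - (n : ℝ) ^ 2 * x)) / fun x : ℝ => 1 + x + 2 * (n:ℝ) * x) from rfl, h]
  field_simp
  ring

/-- For every integer `n ≥ 1`, the function `p(s) = s(1−n²s)/(1+s+2ns)` on `(0, 1/n²)` takes
values in `(0,1)`, its derivative vanishes only at `s = 1/(2n²+n)`, it attains its global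
maximum uniquely there, and `p(1/(2n²+n)) = 1/(1+2n)²`. -/
theorem stmt_10 (n : ℕ) (hn : 1 ≤ n) :
    (∀ s ∈ Set.Ioo (0 : ℝ) (1 / (n : ℝ) ^ 2), pfun n s ∈ Set.Ioo (0 : ℝ) 1) ∧
    (∀ s ∈ Set.Ioo (0 : ℝ) (1 / (n : ℝ) ^ 2),
      (deriv (pfun n) s = 0 ↔ s = 1 / (2 * (n : ℝ) ^ 2 + (n : ℝ)))) ∧
    1 / (2 * (n : ℝ) ^ 2 + (n : ℝ)) ∈ Set.Ioo (0 : ℝ) (1 / (n : ℝ) ^ 2) ∧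
    (∀ s ∈ Set.Ioo (0 : ℝ) (1 / (n : ℝ) ^ 2), s ≠ 1 / (2 * (n : ℝ) ^ 2 + (n : ℝ)) →
      pfun n s < pfun n (1 / (2 * (n : ℝ) ^ 2 + (n : ℝ)))) ∧
    pfun n (1 / (2 * (n : ℝ) ^ 2 + (n : ℝ))) = 1 / (1 + 2 * (n : ℝ)) ^ 2 := by
  set N : ℝ := (n : ℝ) with hNdef
  have hN1 : (1:ℝ) ≤ N := by simp only [hNdef]; exact_mod_cast hn
  have hN0 : (0:ℝ) < N := lt_of_lt_of_le one_pos hN1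
  have hden : (0:ℝ) < 2 * N ^ 2 + N := by positivity
  -- generic positivity of the denominator of pfun
  have hg : ∀ s : ℝ, 0 < s → (0:ℝ) < 1 + s + 2 * N * s := fun s hs => by positivity
  -- value at the critical point
  have hval : pfun n (1 / (2 * N ^ 2 + N)) = 1 / (1 + 2 * N) ^ 2 := by
    unfold pfun
    rw [div_eq_div_iff]
    · field_simp
      ring
    · have h0 : 0 < 1 / (2 * N ^ 2 + N) := by positivity
      exact ne_of_gt (hg _ h0)
    · positivity
  have hcrit : (1 : ℝ) / (2 * N ^ 2 + N) ∈ Set.Ioo (0 : ℝ) (1 / N ^ 2) := by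
    constructor
    · positivity
    · rw [div_lt_div_iff₀ hden (by positivity)]
      nlinarith
  refine ⟨?_, ?_, hcrit, ?_, hval⟩
  · -- values in (0,1)
    rintro s ⟨hs0, hs1⟩
    have hgs := hg s hs0
    have hnum : 0 < s * (1 - N ^ 2 * s) := by
      have : N ^ 2 * s < 1 := by
        have hN2 : (0:ℝ) < N ^ 2 := by positivity
        rw [← lt_div_iff₀' hN2]; exact hs1
      nlinarith
    constructor
    · exact div_pos hnum hgs
    · rw [pfun_key n s (ne_of_gt hgs)]
      have hB : 0 ≤ (1 - N * (2 * N + 1) * s) ^ 2 / ((1 + 2 * N) ^ 2 * (1 + s + 2 * N * s)) := by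
        positivity
      have hA : 1 / (1 + 2 * N) ^ 2 < 1 := by
        rw [div_lt_one (by positivity)]
        nlinarith
      linarith
  · -- derivative vanishes only at the critical point
    rintro s ⟨hs0, hs1⟩
    have hgs := hg s hs0
    rw [pfun_deriv n s (ne_of_gt hgs), div_eq_zero_iff]
    have hsq : (1 + s + 2 * N * s) ^ 2 ≠ 0 := by positivity
    constructor
    · rintro (h | h)
      · have hfac : (1 - (2 * N ^ 2 + N) * s) * (1 + N * s)
            = 1 - 2 * N ^ 2 * s - N ^ 2 * (1 + 2 * N) * s ^ 2 := by ring
        rw [h] at hfac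
        have h2 : 0 < 1 + N * s := by positivity
        have h3 : 1 - (2 * N ^ 2 + N) * s = 0 := by
          rcases mul_eq_zero.mp hfac with h' | h'
          · exact h'
          · exact absurd h' (ne_of_gt h2)
        rw [eq_div_iff (ne_of_gt hden)]
        linarith
      · exact absurd h hsq
    · intro h
      left
      rw [h]
      field_simp
      ring
  · -- strict global maximum
    rintro s ⟨hs0, hs1⟩ hne
    have hgs := hg s hs0
    rw [hval, pfun_key n s (ne_of_gt hgs)]
    have hBpos : 0 < (1 - N * (2 * N + 1) * s) ^ 2 / ((1 + 2 * N) ^ 2 * (1 + s + 2 * N * s)) := by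
      apply div_pos _ (by positivity)
      have h1 : 1 - N * (2 * N + 1) * s ≠ 0 := by
        intro h
        apply hne
        rw [eq_div_iff (ne_of_gt hden)]
        linear_combination -h
      exact (sq_nonneg _).lt_of_ne (Ne.symm (pow_ne_zero 2 h1))
    linarith
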